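/- arXiv:1112.4879 — 2 statements merged into one kernel-verified Lean document; each statement's English description precedes it below -/
import Mathlib

section
/- Let β ∈ (0,1] and let A0, A1, Q0, Q1, Q2 be positive integers with Q2 ≤ A0·Q0. Let B′ be the union over all integer triples (q0,q1,q2) ≠ (0,0,0) with |q0| ≤ Q0, |q1| ≤ Q1, |q2| ≤ Q2 of the sets {(g0,g1,g2) ∈ (1,4]³ : |A0·g0·q0 + A1·g1·q1 + g2·q2| < β}. Then μ(B′) ≤ 6552·β·max{Q2/A0, Q0·Q2/A1}. -/
/-!
Every slab `{g ∈ (1,4]³ : |r g₁ + s g₂ + t g₃| < β}` has volume at most `18β / |c|` for each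
nonzero coefficient `c`, and, the coefficients being integers and `β ≤ 1`, it is empty unless
each coefficient is at most four times the sum of the other two in absolute value.
For `q₁ ≠ 0` this forces `A₁|q₁| ≤ 8M` with `M = max (A₀|q₀|) |q₂|`, so for fixed `(q₀, q₂)`
at most `16M/A₁` slabs of volume `≤ 18β/M` occur: `288β/A₁` in total, hence
`2592 β Q₀Q₂/A₁` over all `(q₀, q₂)`. For `q₁ = 0` the slab is nonempty only if
`A₀|q₀| ≤ 4|q₂|` and `|q₂| ≤ 4A₀|q₀|`: at most `8A₀|q₀|` slabs of volume `≤ 18β/(A₀|q₀|)` for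
each of at most `8Q₂/A₀` values of `q₀`, that is `1152 β Q₂/A₀`.
-/

open MeasureTheory Set
open scoped ENNReal

theorem volume_setOf_abs_mul_add_lt_le (a b β : ℝ) (ha : a ≠ 0) :
    volume {x : ℝ | |a * x + b| < β} ≤ ENNReal.ofReal (2 * β / |a|) := by
  have hsub : {x : ℝ | |a * x + b| < β} ⊆ Metric.ball (-(b / a)) (β / |a|) := by
    intro x hx
    have hmul : (x - -(b / a)) * a = a * x + b := by field_simp; ring
    rwa [Metric.mem_ball, Real.dist_eq, lt_div_iff₀ (abs_pos.mpr ha), ← abs_mul, hmul]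
  calc volume {x : ℝ | |a * x + b| < β} ≤ volume (Metric.ball (-(b / a)) (β / |a|)) :=
        measure_mono hsub
    _ = ENNReal.ofReal (2 * β / |a|) := by rw [Real.volume_ball, mul_div_assoc]

section Fibers

variable {α γ : Type*} [MeasurableSpace α] [MeasurableSpace γ] {μ : Measure α} {ν : Measure γ}
  {s : Set (α × γ)} {c : ℝ≥0∞}

theorem MeasureTheory.Measure.prod_apply_le_of_fiber_le [SFinite ν] (hs : MeasurableSet s)
    {A : Set α} (hsA : ∀ p ∈ s, p.1 ∈ A) (hc : ∀ x ∈ A, ν (Prod.mk x ⁻¹' s) ≤ c) :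
    μ.prod ν s ≤ c * μ A := by
  rw [Measure.prod_apply hs]
  refine (lintegral_mono fun x => ?_).trans (lintegral_indicator_const_le A c)
  by_cases hx : x ∈ A
  · simpa [indicator_of_mem hx] using hc x hx
  · rw [indicator_of_notMem hx, nonpos_iff_eq_zero, measure_eq_zero_iff_ae_notMem]
    exact Filter.Eventually.of_forall fun y hy => hx (hsA _ hy)

theorem MeasureTheory.Measure.prod_apply_le_of_fiber_le' [SFinite μ] [SFinite ν]
    (hs : MeasurableSet s) {B : Set γ} (hsB : ∀ p ∈ s, p.2 ∈ B)
    (hc : ∀ y ∈ B, μ ((·, y) ⁻¹' s) ≤ c) :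
    μ.prod ν s ≤ c * ν B := by
  rw [Measure.prod_apply_symm hs]
  refine (lintegral_mono fun y => ?_).trans (lintegral_indicator_const_le B c)
  by_cases hy : y ∈ B
  · simpa [indicator_of_mem hy] using hc y hy
  · rw [indicator_of_notMem hy, nonpos_iff_eq_zero, measure_eq_zero_iff_ae_notMem]
    exact Filter.Eventually.of_forall fun x hx => hy (hsB _ hx)

end Fibers

def cubeSlab (r s t β : ℝ) : Set (ℝ × ℝ × ℝ) :=
  {g | g.1 ∈ Ioc 1 4 ∧ g.2.1 ∈ Ioc 1 4 ∧ g.2.2 ∈ Ioc 1 4 ∧ |r * g.1 + s * g.2.1 + t * g.2.2| < β}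

theorem measurableSet_cubeSlab (r s t β : ℝ) : MeasurableSet (cubeSlab r s t β) := by
  unfold cubeSlab
  simp only [Set.ofPred_and]
  refine (measurable_fst measurableSet_Ioc).inter <|
    (measurable_snd.fst measurableSet_Ioc).inter <|
    (measurable_snd.snd measurableSet_Ioc).inter (measurableSet_lt (by fun_prop) measurable_const)

theorem volume_Ioc_one_four : volume (Ioc (1 : ℝ) 4) = ENNReal.ofReal 3 := by
  rw [Real.volume_Ioc]; norm_num

theorem volume_cubeSlab_le_of_left {r s t β : ℝ} (hr : r ≠ 0) :
    volume (cubeSlab r s t β) ≤ ENNReal.ofReal (18 * β / |r|) := by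
  rw [Measure.volume_eq_prod]
  refine (Measure.prod_apply_le_of_fiber_le' (measurableSet_cubeSlab r s t β)
    (c := ENNReal.ofReal (2 * β / |r|)) (B := Ioc 1 4 ×ˢ Ioc 1 4)
    (fun g hg => ⟨hg.2.1, hg.2.2.1⟩) fun p _ => ?_).trans_eq ?_
  · refine (measure_mono fun x hx => ?_).trans
      (volume_setOf_abs_mul_add_lt_le r (s * p.1 + t * p.2) β hr)
    simpa only [Set.mem_ofPred_eq, add_assoc] using hx.2.2.2
  · rw [Measure.volume_eq_prod, Measure.prod_prod, volume_Ioc_one_four,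
      ← ENNReal.ofReal_mul (by norm_num), ← ENNReal.ofReal_mul' (by norm_num)]
    ring_nf

theorem volume_cubeSlab_le_of_right {r s t β : ℝ} (ht : t ≠ 0) :
    volume (cubeSlab r s t β) ≤ ENNReal.ofReal (18 * β / |t|) := by
  have hfiber : ∀ x ∈ Ioc (1 : ℝ) 4,
      volume (Prod.mk x ⁻¹' cubeSlab r s t β) ≤
        ENNReal.ofReal (2 * β / |t|) * ENNReal.ofReal 3 := by
    intro x _
    rw [Measure.volume_eq_prod, ← volume_Ioc_one_four]
    refine Measure.prod_apply_le_of_fiber_le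
      (measurable_prodMk_left (measurableSet_cubeSlab r s t β)) (fun p hp => hp.2.1) fun y _ => ?_
    refine (measure_mono fun z hz => ?_).trans
      (volume_setOf_abs_mul_add_lt_le t (r * x + s * y) β ht)
    show |t * z + (r * x + s * y)| < β
    rw [show t * z + (r * x + s * y) = r * x + s * y + t * z by ring]
    exact hz.2.2.2
  rw [Measure.volume_eq_prod]
  refine (Measure.prod_apply_le_of_fiber_le (measurableSet_cubeSlab r s t β)
    (fun g hg => hg.1) hfiber).trans_eq ?_
  rw [volume_Ioc_one_four, ← ENNReal.ofReal_mul' (by norm_num),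
    ← ENNReal.ofReal_mul' (by norm_num)]
  ring_nf

theorem volume_cubeSlab_le_of_max {r s t β : ℝ} (h : max |r| |t| ≠ 0) :
    volume (cubeSlab r s t β) ≤ ENNReal.ofReal (18 * β / max |r| |t|) := by
  rcases le_total |t| |r| with hle | hle
  · rw [max_eq_left hle] at h ⊢
    exact volume_cubeSlab_le_of_left (abs_ne_zero.mp h)
  · rw [max_eq_right hle] at h ⊢
    exact volume_cubeSlab_le_of_right (abs_ne_zero.mp h)

theorem Int.abs_le_of_abs_add_lt_one {a b c : ℤ} {x y z : ℝ} (hx : 1 < x) (hy : |y| ≤ 4)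
    (hz : |z| ≤ 4) (h : |a * x + b * y + c * z| < 1) : |a| ≤ 4 * |b| + 4 * |c| := by
  have hax : |(a : ℝ)| ≤ |a * x| := by
    rw [abs_mul]
    exact le_mul_of_one_le_right (abs_nonneg _) (hx.le.trans (le_abs_self x))
  have hby : |b * y| ≤ |(b : ℝ)| * 4 := by
    rw [abs_mul]; exact mul_le_mul_of_nonneg_left hy (abs_nonneg _)
  have hcz : |c * z| ≤ |(c : ℝ)| * 4 := by
    rw [abs_mul]; exact mul_le_mul_of_nonneg_left hz (abs_nonneg _)
  have htri : |a * x| ≤ |a * x + b * y + c * z| + |b * y| + |c * z| := by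
    have := abs_add_three (a * x + b * y + c * z) (-(b * y)) (-(c * z))
    rwa [abs_neg, abs_neg, show a * x + b * y + c * z + -(b * y) + -(c * z) = (a : ℝ) * x by ring]
      at this
  have hlt : ((|a| : ℤ) : ℝ) < ((4 * |b| + 4 * |c| + 1 : ℤ) : ℝ) := by
    push_cast; linarith
  exact Int.lt_add_one_iff.mp (by exact_mod_cast hlt)

theorem abs_le_of_mem_cubeSlab {a b c : ℤ} {β : ℝ} (hβ : β ≤ 1) {g : ℝ × ℝ × ℝ}
    (hg : g ∈ cubeSlab a b c β) :
    |a| ≤ 4 * |b| + 4 * |c| ∧ |b| ≤ 4 * |a| + 4 * |c| ∧ |c| ≤ 4 * |a| + 4 * |b| := by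
  obtain ⟨⟨h1, h1'⟩, ⟨h2, h2'⟩, ⟨h3, h3'⟩, hlt⟩ := hg
  have hg1 : |g.1| ≤ 4 := abs_le.mpr ⟨by linarith, h1'⟩
  have hg2 : |g.2.1| ≤ 4 := abs_le.mpr ⟨by linarith, h2'⟩
  have hg3 : |g.2.2| ≤ 4 := abs_le.mpr ⟨by linarith, h3'⟩
  refine ⟨Int.abs_le_of_abs_add_lt_one h1 hg2 hg3 (by linarith),
    Int.abs_le_of_abs_add_lt_one h2 hg1 hg3 ?_, Int.abs_le_of_abs_add_lt_one h3 hg1 hg2 ?_⟩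
  · rw [show (b : ℝ) * g.2.1 + a * g.1 + c * g.2.2 = a * g.1 + b * g.2.1 + c * g.2.2 by ring]
    linarith
  · rw [show (c : ℝ) * g.2.2 + a * g.1 + b * g.2.1 = a * g.1 + b * g.2.1 + c * g.2.2 by ring]
    linarith

noncomputable def nonzeroIntsAbsLe (x : ℝ) : Finset ℤ := (Finset.Icc (-⌊x⌋) ⌊x⌋).erase 0

theorem mem_nonzeroIntsAbsLe {x : ℝ} {n : ℤ} :
    n ∈ nonzeroIntsAbsLe x ↔ n ≠ 0 ∧ |(n : ℝ)| ≤ x := by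
  rw [nonzeroIntsAbsLe, Finset.mem_erase, Finset.mem_Icc, ← abs_le, Int.le_floor, Int.cast_abs]

theorem card_nonzeroIntsAbsLe_le {x : ℝ} (hx : 0 ≤ x) :
    ((nonzeroIntsAbsLe x).card : ℝ) ≤ 2 * x := by
  have h0 : 0 ≤ ⌊x⌋ := Int.floor_nonneg.mpr hx
  have hcard : ((nonzeroIntsAbsLe x).card : ℤ) = 2 * ⌊x⌋ := by
    rw [nonzeroIntsAbsLe, Finset.card_erase_of_mem (Finset.mem_Icc.mpr ⟨by omega, h0⟩),
      Int.card_Icc]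
    omega
  have hcardR : ((nonzeroIntsAbsLe x).card : ℝ) = 2 * ⌊x⌋ := by exact_mod_cast hcard
  rw [hcardR]
  linarith [Int.floor_le x]

theorem measure_biUnion_finset_le_ofReal {α ι : Type*} [MeasurableSpace α] {μ : Measure α}
    (I : Finset ι) (f : ι → Set α) {c d : ℝ} (hf : ∀ i ∈ I, μ (f i) ≤ ENNReal.ofReal c)
    (hcd : I.card * c ≤ d) : μ (⋃ i ∈ I, f i) ≤ ENNReal.ofReal d :=
  calc μ (⋃ i ∈ I, f i) ≤ ∑ i ∈ I, μ (f i) := measure_biUnion_finset_le I f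
    _ ≤ I.card • ENNReal.ofReal c := Finset.sum_le_card_nsmul _ _ _ hf
    _ = ENNReal.ofReal (I.card * c) := by
      rw [nsmul_eq_mul, ENNReal.ofReal_mul (Nat.cast_nonneg _), ENNReal.ofReal_natCast]
    _ ≤ ENNReal.ofReal d := ENNReal.ofReal_le_ofReal hcd

def slabsWithSecondNonzero (A0 A1 Q0 Q2 : ℕ) (β : ℝ) : Set (ℝ × ℝ × ℝ) :=
  ⋃ q0 ∈ Finset.Icc (-(Q0 : ℤ)) Q0, ⋃ q2 ∈ Finset.Icc (-(Q2 : ℤ)) Q2,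
    ⋃ q1 ∈ nonzeroIntsAbsLe (8 * max |(A0 : ℝ) * q0| |(q2 : ℝ)| / A1),
      cubeSlab (A0 * q0) (A1 * q1) q2 β

def slabsWithSecondZero (A0 Q2 : ℕ) (β : ℝ) : Set (ℝ × ℝ × ℝ) :=
  ⋃ q0 ∈ nonzeroIntsAbsLe (4 * Q2 / A0), ⋃ q2 ∈ nonzeroIntsAbsLe (4 * |(A0 : ℝ) * q0|),
    cubeSlab (A0 * q0) 0 q2 β

theorem cubeSlab_subset_slabsWithSecondNonzero {A0 A1 Q0 Q2 : ℕ} {β : ℝ} (hA1 : 0 < A1)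
    (hβ : β ≤ 1) {q0 q1 q2 : ℤ} (hq1 : q1 ≠ 0) (hq0 : |q0| ≤ Q0) (hq2 : |q2| ≤ Q2) :
    cubeSlab (A0 * q0) (A1 * q1) q2 β ⊆ slabsWithSecondNonzero A0 A1 Q0 Q2 β := by
  intro g hg
  have hb : |(A1 : ℝ) * q1| ≤ 4 * |(A0 : ℝ) * q0| + 4 * |(q2 : ℝ)| := by
    exact_mod_cast (abs_le_of_mem_cubeSlab (a := A0 * q0) (b := A1 * q1) (c := q2) hβ
      (by push_cast; exact hg)).2.1
  have hA1R : (0 : ℝ) < A1 := by exact_mod_cast hA1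
  simp only [slabsWithSecondNonzero, mem_iUnion, mem_nonzeroIntsAbsLe, Finset.mem_Icc]
  refine ⟨q0, abs_le.mp hq0, q2, abs_le.mp hq2, q1, ⟨hq1, ?_⟩, hg⟩
  rw [le_div_iff₀ hA1R]
  rw [abs_mul, abs_of_pos hA1R] at hb
  linarith [le_max_left |(A0 : ℝ) * q0| |(q2 : ℝ)|, le_max_right |(A0 : ℝ) * q0| |(q2 : ℝ)|]

theorem cubeSlab_subset_slabsWithSecondZero {A0 Q2 : ℕ} {β : ℝ} (hA0 : 0 < A0) (hβ : β ≤ 1)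
    {q0 q2 : ℤ} (hq : q0 ≠ 0 ∨ q2 ≠ 0) (hq2 : |q2| ≤ Q2) :
    cubeSlab (A0 * q0) 0 q2 β ⊆ slabsWithSecondZero A0 Q2 β := by
  intro g hg
  obtain ⟨hb0, -, hb2⟩ := abs_le_of_mem_cubeSlab (a := A0 * q0) (b := 0) (c := q2) hβ
    (by push_cast; exact hg)
  simp only [abs_zero, mul_zero, add_zero, zero_add] at hb0 hb2
  have hA0R : (0 : ℝ) < A0 := by exact_mod_cast hA0
  have hq0ne : q0 ≠ 0 := by
    rintro rfl
    simp only [mul_zero, abs_zero, abs_nonpos_iff] at hb2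
    simp [hb2] at hq
  have hq2ne : q2 ≠ 0 := by
    rintro rfl
    simp only [abs_zero, mul_zero, abs_nonpos_iff, mul_eq_zero] at hb0
    exact hq0ne (hb0.resolve_left (by exact_mod_cast hA0.ne'))
  have hb0R : |(A0 : ℝ) * q0| ≤ 4 * |(q2 : ℝ)| := by exact_mod_cast hb0
  have hb2R : |(q2 : ℝ)| ≤ 4 * |(A0 : ℝ) * q0| := by exact_mod_cast hb2
  have hq2R : |(q2 : ℝ)| ≤ Q2 := by exact_mod_cast hq2
  simp only [slabsWithSecondZero, mem_iUnion, mem_nonzeroIntsAbsLe]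
  refine ⟨q0, ⟨hq0ne, ?_⟩, q2, ⟨hq2ne, hb2R⟩, hg⟩
  rw [le_div_iff₀ hA0R]
  rw [abs_mul, abs_of_pos hA0R] at hb0R
  linarith

theorem cubeSlab_subset_slabs {A0 A1 Q0 Q2 : ℕ} {β : ℝ} (hA0 : 0 < A0) (hA1 : 0 < A1)
    (hβ : β ≤ 1) {q0 q1 q2 : ℤ} (hq : (q0, q1, q2) ≠ (0, 0, 0)) (hq0 : |q0| ≤ Q0)
    (hq2 : |q2| ≤ Q2) :
    cubeSlab (A0 * q0) (A1 * q1) q2 β ⊆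
      slabsWithSecondNonzero A0 A1 Q0 Q2 β ∪ slabsWithSecondZero A0 Q2 β := by
  rcases eq_or_ne q1 0 with rfl | hq1
  · have hq' : q0 ≠ 0 ∨ q2 ≠ 0 := by
      by_contra! h
      exact hq (by simp [h.1, h.2])
    simpa only [Int.cast_zero, mul_zero] using
      (cubeSlab_subset_slabsWithSecondZero hA0 hβ hq' hq2).trans subset_union_right
  · exact (cubeSlab_subset_slabsWithSecondNonzero hA1 hβ hq1 hq0 hq2).trans subset_union_left

theorem card_Icc_neg_self (Q : ℕ) : ((Finset.Icc (-(Q : ℤ)) Q).card : ℝ) = 2 * Q + 1 := by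
  have h : ((Finset.Icc (-(Q : ℤ)) Q).card : ℤ) = 2 * Q + 1 := by rw [Int.card_Icc]; omega
  exact_mod_cast h

theorem volume_slabsWithSecondNonzero_le {A0 A1 Q0 Q2 : ℕ} {β : ℝ} (hβ : 0 ≤ β) (hQ0 : 0 < Q0)
    (hQ2 : 0 < Q2) :
    volume (slabsWithSecondNonzero A0 A1 Q0 Q2 β) ≤
      ENNReal.ofReal (2592 * β * (Q0 * Q2 / A1)) := by
  refine measure_biUnion_finset_le_ofReal _ _ (c := (2 * Q2 + 1) * (288 * β / A1))
    (fun q0 _ => ?_) ?_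
  · refine measure_biUnion_finset_le_ofReal _ _ (c := 288 * β / A1) (fun q2 _ => ?_)
      (by rw [card_Icc_neg_self])
    set M := max |(A0 : ℝ) * q0| |(q2 : ℝ)|
    refine measure_biUnion_finset_le_ofReal _ _ (c := 18 * β / M) (fun q1 hq1 => ?_) ?_
    · refine volume_cubeSlab_le_of_max fun hM => ?_
      obtain ⟨hq1ne, hq1le⟩ := mem_nonzeroIntsAbsLe.mp hq1
      rw [show M = 0 from hM, mul_zero, zero_div, abs_nonpos_iff, Int.cast_eq_zero] at hq1le
      exact hq1ne hq1le
    · rcases eq_or_ne M 0 with hM | hM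
      · rw [hM, div_zero, mul_zero]; positivity
      calc _ ≤ 2 * (8 * M / A1) * (18 * β / M) := by
            gcongr
            exact card_nonzeroIntsAbsLe_le (by positivity)
        _ = 288 * β / A1 := by field_simp; ring
  · have hQ0R : (1 : ℝ) ≤ Q0 := by exact_mod_cast hQ0
    have hQ2R : (1 : ℝ) ≤ Q2 := by exact_mod_cast hQ2
    calc _ = (2 * Q0 + 1) * (2 * Q2 + 1) * (288 * β / A1) := by rw [card_Icc_neg_self]; ring
      _ ≤ (9 * Q0 * Q2) * (288 * β / A1) := by gcongr ?_ * _; nlinarith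
      _ = 2592 * β * (Q0 * Q2 / A1) := by ring

theorem volume_slabsWithSecondZero_le {A0 Q2 : ℕ} {β : ℝ} (hA0 : 0 < A0) (hβ : 0 ≤ β) :
    volume (slabsWithSecondZero A0 Q2 β) ≤ ENNReal.ofReal (1152 * β * (Q2 / A0)) := by
  refine measure_biUnion_finset_le_ofReal _ _ (c := 144 * β) (fun q0 hq0 => ?_) ?_
  · have hr : (A0 : ℝ) * q0 ≠ 0 :=
      mul_ne_zero (by positivity) (Int.cast_ne_zero.mpr (mem_nonzeroIntsAbsLe.mp hq0).1)
    refine measure_biUnion_finset_le_ofReal _ _ (fun _ _ => volume_cubeSlab_le_of_left hr) ?_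
    calc _ ≤ 2 * (4 * |(A0 : ℝ) * q0|) * (18 * β / |(A0 : ℝ) * q0|) := by
          gcongr
          exact card_nonzeroIntsAbsLe_le (by positivity)
      _ = 144 * β := by field_simp; ring
  · calc _ ≤ 2 * (4 * Q2 / A0) * (144 * β) := by
          gcongr
          exact card_nonzeroIntsAbsLe_le (by positivity)
      _ = 1152 * β * (Q2 / A0) := by ring

theorem stmt_4_general (β : ℝ) (hβ : β ∈ Set.Ioc (0:ℝ) 1)
    (A0 A1 Q0 Q1 Q2 : ℕ) (hA0 : 0 < A0) (hA1 : 0 < A1)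
    (hQ0 : 0 < Q0) (hQ2 : 0 < Q2) :
    volume (⋃ (q0 : ℤ) (q1 : ℤ) (q2 : ℤ) (_ : (q0, q1, q2) ≠ (0, 0, 0))
        (_ : |q0| ≤ (Q0 : ℤ)) (_ : |q1| ≤ (Q1 : ℤ)) (_ : |q2| ≤ (Q2 : ℤ)),
        {g : ℝ × ℝ × ℝ |
          g.1 ∈ Set.Ioc (1:ℝ) 4 ∧ g.2.1 ∈ Set.Ioc (1:ℝ) 4 ∧ g.2.2 ∈ Set.Ioc (1:ℝ) 4 ∧
          |(A0 : ℝ) * g.1 * (q0 : ℝ) + (A1 : ℝ) * g.2.1 * (q1 : ℝ) + g.2.2 * (q2 : ℝ)| < β})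
      ≤ ENNReal.ofReal (6552 * β * max ((Q2 : ℝ) / (A0 : ℝ)) ((Q0 : ℝ) * (Q2 : ℝ) / (A1 : ℝ))) := by
  obtain ⟨hβ0, hβ1⟩ := hβ
  set m := max ((Q2 : ℝ) / A0) (Q0 * Q2 / A1)
  have hm₀ : β * (Q2 / A0) ≤ β * m := mul_le_mul_of_nonneg_left (le_max_left _ _) hβ0.le
  have hm₁ : β * (Q0 * Q2 / A1) ≤ β * m := mul_le_mul_of_nonneg_left (le_max_right _ _) hβ0.le
  have hm : 0 ≤ β * m := (by positivity : (0 : ℝ) ≤ β * (Q2 / A0)).trans hm₀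
  calc _ ≤ volume (slabsWithSecondNonzero A0 A1 Q0 Q2 β ∪ slabsWithSecondZero A0 Q2 β) := by
        refine measure_mono ?_
        simp only [iUnion_subset_iff]
        intro q0 q1 q2 hq hq0 _ hq2 g ⟨hg1, hg2, hg3, hg⟩
        refine cubeSlab_subset_slabs hA0 hA1 hβ1 hq hq0 hq2 ⟨hg1, hg2, hg3, ?_⟩
        convert hg using 2
        ring
    _ ≤ ENNReal.ofReal (2592 * β * (Q0 * Q2 / A1)) + ENNReal.ofReal (1152 * β * (Q2 / A0)) :=
        (measure_union_le _ _).trans <| add_le_add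
          (volume_slabsWithSecondNonzero_le hβ0.le hQ0 hQ2)
          (volume_slabsWithSecondZero_le hA0 hβ0.le)
    _ = ENNReal.ofReal (2592 * β * (Q0 * Q2 / A1) + 1152 * β * (Q2 / A0)) :=
        (ENNReal.ofReal_add (by positivity) (by positivity)).symm
    _ ≤ ENNReal.ofReal (6552 * β * m) := ENNReal.ofReal_le_ofReal (by linarith)

/-- measure bound from the proof of Lemma 5 of the paper
(case in which the last scaling coefficient is the smallest). -/
theorem stmt_4 (β : ℝ) (hβ : β ∈ Set.Ioc (0:ℝ) 1)
    (A0 A1 Q0 Q1 Q2 : ℕ) (hA0 : 0 < A0) (hA1 : 0 < A1)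
    (hQ0 : 0 < Q0) (hQ1 : 0 < Q1) (hQ2 : 0 < Q2)
    (hle : Q2 ≤ A0 * Q0) :
    volume (⋃ (q0 : ℤ) (q1 : ℤ) (q2 : ℤ) (_ : (q0, q1, q2) ≠ (0, 0, 0))
        (_ : |q0| ≤ (Q0 : ℤ)) (_ : |q1| ≤ (Q1 : ℤ)) (_ : |q2| ≤ (Q2 : ℤ)),
        {g : ℝ × ℝ × ℝ |
          g.1 ∈ Set.Ioc (1:ℝ) 4 ∧ g.2.1 ∈ Set.Ioc (1:ℝ) 4 ∧ g.2.2 ∈ Set.Ioc (1:ℝ) 4 ∧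
          |(A0 : ℝ) * g.1 * (q0 : ℝ) + (A1 : ℝ) * g.2.1 * (q1 : ℝ) + g.2.2 * (q2 : ℝ)| < β})
      ≤ ENNReal.ofReal (6552 * β * max ((Q2 : ℝ) / (A0 : ℝ)) ((Q0 : ℝ) * (Q2 : ℝ) / (A1 : ℝ))) :=
  stmt_4_general β hβ A0 A1 Q0 Q1 Q2 hA0 hA1 hQ0 hQ2
end

section
/- Let n be a positive integer, let ū ∈ 𝔽₂ⁿ be nonzero, and let b̄ ∈ 𝔽₂ⁿ. If b̄_i = 0 for all i < n(ū) and b̄_{n(ū)} = 1, then μ({g ∈ (1,2] : Ḡ(g)·ū = b̄}) = 2^{−(n − n(ū))}; otherwise μ({g ∈ (1,2] : Ḡ(g)·ū = b̄}) = 0. -/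
open MeasureTheory Matrix

/-- The `j`-th binary digit of a real number `g`, viewed in `𝔽₂`:
`[g]_j = ⌊2^j g⌋ − 2⌊2^{j−1} g⌋`. -/
noncomputable def binDigit (g : ℝ) (j : ℕ) : ZMod 2 :=
  ((⌊(2:ℝ) ^ (j : ℤ) * g⌋ - 2 * ⌊(2:ℝ) ^ ((j : ℤ) - 1) * g⌋ : ℤ) : ZMod 2)

/-- The `n × n` lower-triangular Toeplitz matrix over `𝔽₂` whose `(i,j)` entry
equals `[g]_{i−j}` for `j ≤ i` and `0` for `i < j`. -/
noncomputable def Gmat (n : ℕ) (g : ℝ) : Matrix (Fin n) (Fin n) (ZMod 2) :=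
  fun i j => if (j : ℕ) ≤ (i : ℕ) then binDigit g ((i : ℕ) - (j : ℕ)) else 0

/-!
For `g ∈ [1, 2)` the digit `[g]_0` is `1`, and `(Ḡ(g) ū)_i` is the `i`-th coefficient of the
product of the power series `D = ∑ [g]_j X^j` and `U = ∑ u_j X^j`. Since `U = X^k V` with `V`
invertible, `Ḡ(g) ū = b̄` says exactly that `b̄` vanishes below `k` and that the first `n - k`
coefficients of `D` are those of `B V⁻¹`, where `B` is `b̄` shifted down by `k`; the constant
coefficient of `B V⁻¹` is `b_k`. Finally, prescribing the digits `1, …, m` of `g ∈ [1, 2)` is the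
same as prescribing `⌊2^m g⌋`, which confines `g` to a dyadic interval of length `2^{-m}`.
-/

open Set

lemma binDigit_eq_floor (g : ℝ) (j : ℕ) : binDigit g j = ((⌊(2:ℝ) ^ j * g⌋ : ℤ) : ZMod 2) := by
  have h2 : (2 : ZMod 2) = 0 := rfl
  simp [binDigit, h2]

lemma binDigit_zero_of_mem_Ico {g : ℝ} (hg : g ∈ Ico (1:ℝ) 2) : binDigit g 0 = 1 := by
  have hfl : ⌊g⌋ = 1 := by simpa [Int.floor_eq_iff, one_add_one_eq_two] using hg
  simp [binDigit_eq_floor, hfl]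

lemma floor_two_pow_mul_eq_ediv (g : ℝ) (j : ℕ) :
    ⌊(2:ℝ) ^ j * g⌋ = ⌊(2:ℝ) ^ (j + 1) * g⌋ / 2 := by
  have h := Int.floor_div_natCast ((2:ℝ) ^ (j + 1) * g) 2
  push_cast at h
  rw [← h, pow_succ]
  congr 1
  ring

lemma Int.ediv_two_eq_and_cast_eq_iff (z N : ℤ) (c : ZMod 2) :
    z / 2 = N ∧ (z : ZMod 2) = c ↔ z = 2 * N + c.val := by
  have hc : c.val < 2 := c.val_lt
  have hcast : ((c.val : ℤ) : ZMod 2) = c := by simp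
  conv_lhs => rw [← hcast, ZMod.intCast_eq_intCast_iff' _ _ 2]
  push_cast
  omega

lemma exists_floor_eq_iff_binDigit (m : ℕ) (e : ℕ → ZMod 2) :
    ∃ N : ℤ, 2 ^ m ≤ N ∧ N < 2 ^ (m + 1) ∧ ∀ g ∈ Ico (1:ℝ) 2,
      ((∀ t ∈ Finset.Icc 1 m, binDigit g t = e t) ↔ ⌊(2:ℝ) ^ m * g⌋ = N) := by
  induction m with
  | zero =>
    refine ⟨1, by norm_num, by norm_num, fun g hg => ?_⟩
    simp only [Finset.Icc_eq_empty_of_lt zero_lt_one, Finset.notMem_empty, pow_zero, one_mul]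
    simpa [Int.floor_eq_iff, one_add_one_eq_two] using hg
  | succ m ih =>
    obtain ⟨N, hN1, hN2, hN⟩ := ih
    have hc := (e (m + 1)).val_lt
    refine ⟨2 * N + (e (m + 1)).val, by rw [pow_succ]; omega, by rw [pow_succ] at *; omega,
      fun g hg => ?_⟩
    have hsplit : (∀ t ∈ Finset.Icc 1 (m + 1), binDigit g t = e t) ↔
        (∀ t ∈ Finset.Icc 1 m, binDigit g t = e t) ∧ binDigit g (m + 1) = e (m + 1) := by
      simp only [Finset.mem_Icc]
      refine ⟨fun h => ⟨fun t ht => h t ⟨ht.1, by omega⟩, h _ ⟨by omega, le_rfl⟩⟩,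
        fun h t ht => ?_⟩
      rcases Nat.lt_or_ge t (m + 1) with hlt | hge
      · exact h.1 t ⟨ht.1, by omega⟩
      · obtain rfl : t = m + 1 := by omega
        exact h.2
    rw [hsplit, hN g hg, floor_two_pow_mul_eq_ediv, binDigit_eq_floor,
      Int.ediv_two_eq_and_cast_eq_iff]

lemma volume_setOf_floor_two_pow_mul_eq (m : ℕ) (N : ℤ) :
    volume {g : ℝ | ⌊(2:ℝ) ^ m * g⌋ = N} = ENNReal.ofReal ((2:ℝ) ^ (-(m:ℤ))) := by
  have hpow : (0:ℝ) < 2 ^ m := by positivity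
  have hset : {g : ℝ | ⌊(2:ℝ) ^ m * g⌋ = N} = Ico ((N : ℝ) / 2 ^ m) ((N + 1) / 2 ^ m) := by
    ext g
    rw [mem_ofPred_eq, Int.floor_eq_iff, mem_Ico, div_le_iff₀ hpow, lt_div_iff₀ hpow]
    constructor <;> rintro ⟨h1, h2⟩ <;> constructor <;> linarith
  rw [hset, Real.volume_Ico, _root_.zpow_neg, zpow_natCast, ← sub_div, add_sub_cancel_left,
    one_div]

lemma volume_binDigit_cylinder (m : ℕ) (e : ℕ → ZMod 2) :
    volume {g ∈ Ico (1:ℝ) 2 | ∀ t ∈ Finset.Icc 1 m, binDigit g t = e t}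
      = ENNReal.ofReal ((2:ℝ) ^ (-(m:ℤ))) := by
  obtain ⟨N, hN1, hN2, hN⟩ := exists_floor_eq_iff_binDigit m e
  rw [← volume_setOf_floor_two_pow_mul_eq m N]
  congr 1
  ext g
  refine ⟨fun ⟨hg, h⟩ => (hN g hg).1 h, fun h => ?_⟩
  have hpow : (0:ℝ) < 2 ^ m := by positivity
  have hlo : ((2 ^ m : ℤ) : ℝ) ≤ N := by exact_mod_cast hN1
  have hhi : (N : ℝ) + 1 ≤ ((2 ^ (m + 1) : ℤ) : ℝ) := by exact_mod_cast hN2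
  push_cast at hlo hhi
  rw [pow_succ] at hhi
  have hfl := h
  rw [mem_ofPred_eq, Int.floor_eq_iff] at hfl
  have hg : g ∈ Ico (1:ℝ) 2 := ⟨by nlinarith, by nlinarith⟩
  exact ⟨hg, (hN g hg).2 h⟩

open PowerSeries

section Semiring

variable {R : Type*} [Semiring R] {n : ℕ}

def lowerToeplitz (n : ℕ) (d : ℕ → R) : Matrix (Fin n) (Fin n) R :=
  of fun i j => if (j : ℕ) ≤ i then d (i - j) else 0

def finSeries (v : Fin n → R) : R⟦X⟧ :=
  mk fun j => if h : j < n then v ⟨j, h⟩ else 0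

lemma coeff_finSeries (v : Fin n → R) (i : Fin n) : coeff (i : ℕ) (finSeries v) = v i := by
  simp [finSeries]

lemma lowerToeplitz_mulVec_apply (d : ℕ → R) (v : Fin n → R) (i : Fin n) :
    (lowerToeplitz n d *ᵥ v) i = coeff (i : ℕ) (mk d * finSeries v) := by
  set c : ℕ → R := fun j => coeff j (finSeries v)
  calc (lowerToeplitz n d *ᵥ v) i
      = ∑ j ∈ Finset.range n, if j ≤ (i : ℕ) then d (i - j) * c j else 0 := by
        rw [mulVec, dotProduct, ← Fin.sum_univ_eq_sum_range
          (fun j => if j ≤ (i : ℕ) then d (i - j) * c j else 0)]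
        refine Finset.sum_congr rfl fun j _ => ?_
        simp [lowerToeplitz, c, coeff_finSeries, ite_mul]
    _ = ∑ j ∈ Finset.range (i + 1), d (i - j) * c j := by
        rw [← Finset.sum_filter]
        congr 1
        ext j
        simp only [Finset.mem_filter, Finset.mem_range]
        omega
    _ = coeff (i : ℕ) (mk d * finSeries v) := by
        rw [coeff_mul, ← Finset.Nat.sum_antidiagonal_swap,
          Finset.Nat.sum_antidiagonal_eq_sum_range_succ_mk]
        simp [c]

lemma forall_lt_coeff_X_pow_mul_eq_iff {k M : ℕ} (hkM : k ≤ M) (W B : R⟦X⟧) :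
    (∀ i < M, coeff i (X ^ k * W) = coeff i B) ↔
      (∀ i < k, coeff i B = 0) ∧ ∀ t < M - k, coeff t W = coeff (k + t) B := by
  simp only [coeff_X_pow_mul']
  refine ⟨fun h => ⟨fun i hi => ?_, fun t ht => ?_⟩, fun ⟨h₁, h₂⟩ i hi => ?_⟩
  · simpa [hi.not_ge, eq_comm] using h i (by omega)
  · simpa using h (k + t) (by omega)
  · split_ifs with hki
    · simpa [Nat.add_sub_cancel' hki] using h₂ (i - k) (by omega)
    · exact (h₁ i (by omega)).symm

end Semiring

lemma forall_lt_coeff_eq_iff_X_pow_dvd {R : Type*} [Ring R] (M : ℕ) (P Q : R⟦X⟧) :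
    (∀ t < M, coeff t P = coeff t Q) ↔ X ^ M ∣ P - Q := by
  simp [X_pow_dvd_iff, sub_eq_zero]

section Field

variable {K : Type*} [Field K] {n : ℕ}

lemma forall_lt_coeff_mul_eq_iff {D V B : K⟦X⟧} (hV : constantCoeff V ≠ 0) (M : ℕ) :
    (∀ t < M, coeff t (D * V) = coeff t B) ↔ ∀ t < M, coeff t D = coeff t (B * V⁻¹) := by
  have hVunit : IsUnit V := isUnit_iff_constantCoeff.mpr hV.isUnit
  have hfactor : D * V - B = (D - B * V⁻¹) * V := by
    rw [sub_mul, mul_assoc, PowerSeries.inv_mul_cancel V hV, mul_one]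
  rw [forall_lt_coeff_eq_iff_X_pow_dvd, forall_lt_coeff_eq_iff_X_pow_dvd, hfactor,
    hVunit.dvd_mul_right]

lemma lowerToeplitz_mulVec_eq_iff (u b : Fin n → K) (k : Fin n) (hk1 : u k ≠ 0)
    (hk2 : ∀ i < k, u i = 0) :
    ∃ e : ℕ → K, e 0 = b k / u k ∧ ∀ d : ℕ → K,
      (lowerToeplitz n d *ᵥ u = b ↔ (∀ i < k, b i = 0) ∧ ∀ t < n - k, d t = e t) := by
  obtain ⟨V, hUV⟩ : X ^ (k : ℕ) ∣ finSeries u := X_pow_dvd_iff.mpr fun i hi => by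
    simpa [finSeries, hi.trans k.isLt] using hk2 ⟨i, hi.trans k.isLt⟩ hi
  have hV : constantCoeff V = u k := by
    rw [← coeff_finSeries u k, hUV, coeff_X_pow_mul', if_pos le_rfl, Nat.sub_self,
      coeff_zero_eq_constantCoeff_apply]
  set B : K⟦X⟧ := mk fun t => coeff (k + t) (finSeries b)
  refine ⟨fun t => coeff t (B * V⁻¹), ?_, fun d => ?_⟩
  · simp [B, hV, div_eq_mul_inv, ← coeff_finSeries b k]
  have hsum : lowerToeplitz n d *ᵥ u = b ↔
      ∀ i < n, coeff i (X ^ (k : ℕ) * (mk d * V)) = coeff i (finSeries b) := by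
    rw [funext_iff, Fin.forall_iff]
    refine forall₂_congr fun i hi => ?_
    rw [lowerToeplitz_mulVec_apply, hUV, mul_left_comm, ← coeff_finSeries b ⟨i, hi⟩]
  have hB : ∀ t, coeff (k + t) (finSeries b) = coeff t B := fun t => by simp [B]
  rw [hsum, forall_lt_coeff_X_pow_mul_eq_iff k.isLt.le]
  simp only [hB, forall_lt_coeff_mul_eq_iff (hV ▸ hk1), coeff_mk]
  refine and_congr_left' ⟨fun h i hi => ?_, fun h i hi => ?_⟩
  · simpa [← coeff_finSeries b i] using h i hi
  · simpa [finSeries, hi.trans k.isLt] using h ⟨i, hi.trans k.isLt⟩ hi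

end Field

lemma Gmat_mulVec_eq_iff {n : ℕ} (u b : Fin n → ZMod 2) (k : Fin n) (hk1 : u k ≠ 0)
    (hk2 : ∀ i < k, u i = 0) :
    ∃ e : ℕ → ZMod 2, ∀ g ∈ Ico (1:ℝ) 2, Gmat n g *ᵥ u = b ↔
      ((∀ i < k, b i = 0) ∧ b k = 1) ∧ ∀ t ∈ Finset.Icc 1 (n - 1 - k), binDigit g t = e t := by
  obtain ⟨e, he0, he⟩ := lowerToeplitz_mulVec_eq_iff u b k hk1 hk2
  have hu : u k = 1 := by revert hk1; generalize u k = x; decide +revert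
  rw [hu, div_one] at he0
  refine ⟨e, fun g hg => ?_⟩
  have hdigits : (∀ t < n - k, binDigit g t = e t) ↔
      b k = 1 ∧ ∀ t ∈ Finset.Icc 1 (n - 1 - k), binDigit g t = e t := by
    rw [← he0, ← binDigit_zero_of_mem_Ico hg]
    refine ⟨fun h => ⟨(h 0 (by omega)).symm, fun t ht => h t ?_⟩, fun ⟨h0, h⟩ t ht => ?_⟩
    · simp only [Finset.mem_Icc] at ht
      omega
    · rcases t with _ | t
      · exact h0.symm
      · exact h _ (Finset.mem_Icc.mpr ⟨t.succ_pos, by omega⟩)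
  rw [show Gmat n g = lowerToeplitz n (binDigit g) from rfl, he, hdigits, and_assoc]

theorem stmt_9_general (n : ℕ) (u : Fin n → ZMod 2)
    (k : Fin n) (hk1 : u k ≠ 0) (hk2 : ∀ i : Fin n, i < k → u i = 0)
    (b : Fin n → ZMod 2) :
    volume {g : ℝ | g ∈ Set.Ioc (1:ℝ) 2 ∧ Gmat n g *ᵥ u = b} =
      if (∀ i : Fin n, i < k → b i = 0) ∧ b k = 1 then
        ENNReal.ofReal ((2:ℝ) ^ (-((n : ℤ) - ((k : ℕ) + 1))))
      else 0 := by
  obtain ⟨e, he⟩ := Gmat_mulVec_eq_iff u b k hk1 hk2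
  -- `[2]_0 = 0`, so the digit expansions live on `[1, 2)` rather than on `(1, 2]`.
  rw [show volume {g : ℝ | g ∈ Ioc (1:ℝ) 2 ∧ Gmat n g *ᵥ u = b} =
      volume {g ∈ Ico (1:ℝ) 2 | Gmat n g *ᵥ u = b} from
    measure_congr (ae_eq_set_inter Ico_ae_eq_Ioc.symm (ae_eq_refl _))]
  split_ifs with hb
  · rw [show -((n : ℤ) - ((k : ℕ) + 1)) = -((n - 1 - k : ℕ) : ℤ) by omega,
      ← volume_binDigit_cylinder (n - 1 - k) e]
    congr 1
    ext g
    exact and_congr_right fun hg => (he g hg).trans (and_iff_right hb)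
  · convert measure_empty (μ := volume)
    exact eq_empty_iff_forall_notMem.mpr fun g ⟨hg, h⟩ => hb ((he g hg).1 h).1

/-- exact distribution of the image vector `Ḡ(g)ū` for `g`
ranging over `(1,2]` (used in the proof of Lemma 4 of the paper). Here `k` is
the least (0-based) index with `ū_k ≠ 0`, so that `n(ū) = k + 1` in the 1-based
indexing of the paper. -/
theorem stmt_9 (n : ℕ) (hn : 0 < n) (u : Fin n → ZMod 2) (hu : u ≠ 0)
    (k : Fin n) (hk1 : u k ≠ 0) (hk2 : ∀ i : Fin n, i < k → u i = 0)
    (b : Fin n → ZMod 2) :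
    volume {g : ℝ | g ∈ Set.Ioc (1:ℝ) 2 ∧ Gmat n g *ᵥ u = b} =
      if (∀ i : Fin n, i < k → b i = 0) ∧ b k = 1 then
        ENNReal.ofReal ((2:ℝ) ^ (-((n : ℤ) - ((k : ℕ) + 1))))
      else 0 :=
  stmt_9_general n u k hk1 hk2 b
end
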